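/- arXiv:1705.02884 — 2 statements merged into one kernel-verified Lean document; each statement's English description precedes it below -/
import Mathlib

section
/- In any reachable global state S of the lazy list, if n is an unmarked node with successor n.next, then for any key strictly between n.val and n.next.val, no node with that key belongs to the abstract set AbS(S). -/
/-!
Each node has at most one successor, so the nodes reachable from `Head` form a chain under
reachability, along which keys strictly increase. A reachable node `m` therefore comes at or
before `n`, giving `val m ≤ val n`, or after `n` and hence at or after `n.next`, giving
`val n.next ≤ val m`.
-/

/-- Reachability from `head` via next pointers. -/
def ReachFrom {Node : Type} (nxt : Node → Option Node) (head n : Node) : Prop :=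
  Relation.ReflTransGen (fun a b => nxt a = some b) head n

/-- The abstract set of a lazy-list state: the unmarked nodes reachable from
`Head`. -/
def AbS {Node : Type} (nxt : Node → Option Node) (marked : Node → Bool)
    (head : Node) : Set Node :=
  {n | ReachFrom nxt head n ∧ marked n = false}

namespace ReachFrom

variable {Node : Type} {nxt : Node → Option Node} {a b c a' : Node}

theorem total (hab : ReachFrom nxt a b) (hac : ReachFrom nxt a c) :
    ReachFrom nxt b c ∨ ReachFrom nxt c b :=
  Relation.ReflTransGen.total_of_right_unique
    (fun _ _ _ hb hc => Option.some_injective _ (hb.symm.trans hc)) hab hac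

theorem of_next_of_ne (hab : ReachFrom nxt a b) (hnxt : nxt a = some a') (hne : a ≠ b) :
    ReachFrom nxt a' b := by
  obtain rfl | ⟨c, hac, hcb⟩ := Relation.ReflTransGen.cases_head hab
  · exact absurd rfl hne
  · rwa [Option.some_injective _ (hnxt.symm.trans hac)]

theorem val_le {α : Type*} [Preorder α] {val : Node → α}
    (hsort : ∀ a b, nxt a = some b → val a < val b) (hab : ReachFrom nxt a b) :
    val a ≤ val b := by
  induction hab with
  | refl => exact le_rfl
  | tail _ hstep ih => exact ih.trans (hsort _ _ hstep).le

theorem not_of_val_between {α : Type*} [Preorder α] {val : Node → α} {head n n' m : Node}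
    (hsort : ∀ a b, nxt a = some b → val a < val b)
    (hn : ReachFrom nxt head n) (hnxt : nxt n = some n')
    (h1 : val n < val m) (h2 : val m < val n') : ¬ ReachFrom nxt head m := by
  intro hm
  rcases hm.total hn with hmn | hnm
  · exact (hmn.val_le hsort).not_gt h1
  · have hne : n ≠ m := by rintro rfl; exact h1.false
    exact ((hnm.of_next_of_ne hnxt hne).val_le hsort).not_gt h2

end ReachFrom

/-- In any (reachable) global state `S` of the lazy list —
where the list is strictly sorted by key and every unmarked node is reachable
from `Head` — if `n` is an unmarked node with successor `n.next`, then for any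
key strictly between `n.val` and `n.next.val`, no node with that key belongs
to the abstract set `AbS(S)`. -/
theorem lazy_list_key_between_not_in_abs
    (Node : Type) (val : Node → ℤ) (nxt : Node → Option Node)
    (marked : Node → Bool) (head : Node)
    -- strict sortedness
    (hsort : ∀ a b, nxt a = some b → val a < val b)
    -- every unmarked node is reachable from Head
    (hreach : ∀ n, marked n = false → ReachFrom nxt head n)
    (n n' : Node) (key : ℤ)
    (hn : marked n = false) (hnxt : nxt n = some n')
    (h1 : val n < key) (h2 : key < val n') :
    ∀ m, val m = key → m ∉ AbS nxt marked head := by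
  rintro m rfl ⟨hm, -⟩
  exact ReachFrom.not_of_val_between hsort (hreach n hn) hnxt h1 h2 hm
end

section
/- In the lazy list, if a Remove(key) operation returns true, then a node with that key is in the abstract set in the pre-state of its linearization point (the write n2.marked = true), and no node with that key is in the abstract set in the post-state of the linearization point. -/
/-! Along a strictly sorted list the keys strictly increase, so two distinct nodes reachable from
`Head` (one of which is then reachable from the other, successors being unique) carry distinct
keys. Hence `n2` is the only reachable node with key `key`, and once it is marked none is left. -/

namespace ReachFrom

variable {Node : Type} {α : Type*} [Preorder α] {val : Node → α} {nxt : Node → Option Node}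

theorem val_lt_of_ne (hsort : ∀ a b, nxt a = some b → val a < val b) {a b : Node}
    (hab : ReachFrom nxt a b) (hne : a ≠ b) : val a < val b := by
  rcases Relation.reflTransGen_iff_eq_or_transGen.mp hab with rfl | htrans
  · exact absurd rfl hne
  · exact Relation.TransGen.trans_induction_on htrans (hsort _ _) fun _ _ => lt_trans

theorem total_s14 {head a b : Node} (ha : ReachFrom nxt head a) (hb : ReachFrom nxt head b) :
    ReachFrom nxt a b ∨ ReachFrom nxt b a :=
  Relation.ReflTransGen.total_of_right_unique
    (fun _ _ _ hb hc => Option.some.inj (hb.symm.trans hc)) ha hb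

theorem eq_of_val_eq (hsort : ∀ a b, nxt a = some b → val a < val b) {head a b : Node}
    (ha : ReachFrom nxt head a) (hb : ReachFrom nxt head b) (hval : val a = val b) : a = b := by
  by_contra hne
  rcases total_s14 ha hb with hab | hba
  · exact (val_lt_of_ne hsort hab hne).ne hval
  · exact (val_lt_of_ne hsort hba (Ne.symm hne)).ne hval.symm

end ReachFrom

theorem notMem_AbS_update_self {Node : Type} [DecidableEq Node] (nxt : Node → Option Node)
    (marked : Node → Bool) (head n : Node) : n ∉ AbS nxt (Function.update marked n true) head :=
  fun h => by simp [AbS] at h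

theorem remove_true_abs_pre_post_general
    (Node : Type) [DecidableEq Node]
    (val : Node → ℤ) (nxt : Node → Option Node)
    (marked : Node → Bool) (head : Node)
    (key : ℤ) (n2 : Node)
    -- the list is strictly sorted in the pre-state
    (hsort : ∀ a b, nxt a = some b → val a < val b)
    -- every unmarked node is reachable from Head in the pre-state
    (hreach : ∀ n, marked n = false → ReachFrom nxt head n)
    -- facts from Locate and the successful test n2.val = key
    (hm2 : marked n2 = false)
    (heq : val n2 = key) :
    -- pre-state of the LP: a node with key `key` is in the abstract set
    (∃ m, val m = key ∧ m ∈ AbS nxt marked head) ∧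
    -- post-state of the LP (after the write n2.marked := true):
    -- no node with key `key` is in the abstract set
    (∀ m, val m = key →
      m ∉ AbS nxt (Function.update marked n2 true) head) := by
  refine ⟨⟨n2, heq, hreach n2 hm2, hm2⟩, ?_⟩
  rintro m hm hmem
  obtain rfl : m = n2 := ReachFrom.eq_of_val_eq hsort hmem.1 (hreach n2 hm2) (hm.trans heq.symm)
  exact notMem_AbS_update_self nxt marked head m hmem

/-- Lazy list, `Remove(key)` returning `true`.
`Locate(key)` returned locked unmarked adjacent nodes `n1, n2` with
`n1.val < key ≤ n2.val`, and the test `n2.val = key` succeeded.  The LP is the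
logical-removal write `n2.marked := true`; keys are immutable and this write
is the only change between the pre- and post-state of the LP.  Then: in the
pre-state of the LP a node with key `key` is in the abstract set, and in the
post-state of the LP no node with key `key` is in the abstract set. -/
theorem remove_true_abs_pre_post
    (Node : Type) [DecidableEq Node]
    (val : Node → ℤ) (nxt : Node → Option Node)
    (marked : Node → Bool) (head : Node)
    (key : ℤ) (n1 n2 : Node)
    -- the list is strictly sorted in the pre-state
    (hsort : ∀ a b, nxt a = some b → val a < val b)
    -- every unmarked node is reachable from Head in the pre-state
    (hreach : ∀ n, marked n = false → ReachFrom nxt head n)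
    -- facts from Locate and the successful test n2.val = key
    (hadj : nxt n1 = some n2)
    (hm1 : marked n1 = false) (hm2 : marked n2 = false)
    (h1 : val n1 < key) (heq : val n2 = key) :
    -- pre-state of the LP: a node with key `key` is in the abstract set
    (∃ m, val m = key ∧ m ∈ AbS nxt marked head) ∧
    -- post-state of the LP (after the write n2.marked := true):
    -- no node with key `key` is in the abstract set
    (∀ m, val m = key →
      m ∉ AbS nxt (Function.update marked n2 true) head) :=
  remove_true_abs_pre_post_general Node val nxt marked head key n2 hsort hreach hm2 heq
end
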